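/- Let Q(x,y) = α(x) − β(y) be a quadratic form on ℝ^u × ℝ^s with α, β positive definite, and let b_c: B̄_u → B̄_u × B̄_s be a continuous map such that Q(b_c(x) − b_c(y)) > 0 for all x ≠ y. Then there is a Lipschitz function y: B̄_u → B̄_s with b_c(x) = (π_u(b_c(x)), y(π_u(b_c(x)))) ; i.e., the image of b_c is the graph of a Lipschitz function over its projection to the first factor. -/
import Mathlib


open Set Metric

private lemma quad_continuous {n : ℕ} (q : QuadraticForm ℝ (Fin n → ℝ)) :
    Continuous q := by
  let B := QuadraticMap.associatedHom ℝ q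
  let L : (Fin n → ℝ) →ₗ[ℝ] ((Fin n → ℝ) →L[ℝ] ℝ) :=
    { toFun := fun v => LinearMap.toContinuousLinearMap (B v)
      map_add' := fun a b => by ext w; simp
      map_smul' := fun c a => by ext w; simp }
  have hL : Continuous L := L.continuous_of_finiteDimensional
  have h2 : Continuous fun v => L v v :=
    isBoundedBilinearMap_apply.continuous.comp (hL.prodMk continuous_id)
  have : (fun v => L v v) = fun v => q v := by
    funext v
    simpa [L, B] using QuadraticMap.associated_eq_self_apply ℝ q v
  rwa [this] at h2

private lemma quad_lower {n : ℕ} (q : QuadraticForm ℝ (Fin n → ℝ)) (hq : q.PosDef) :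
    ∃ m > (0:ℝ), ∀ v, m * ‖v‖ ^ 2 ≤ q v := by
  rcases eq_or_ne n 0 with h | h
  · refine ⟨1, one_pos, fun v => ?_⟩
    subst h
    have hv : v = 0 := Subsingleton.elim _ _
    rw [hv, map_zero, norm_zero]; norm_num
  · haveI : Nonempty (Fin n) := ⟨⟨0, Nat.pos_of_ne_zero h⟩⟩
    have hsp : (Metric.sphere (0 : Fin n → ℝ) 1).Nonempty :=
      NormedSpace.sphere_nonempty.2 (by norm_num)
    have hcpt : IsCompact (Metric.sphere (0 : Fin n → ℝ) 1) := isCompact_sphere _ _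
    obtain ⟨v₀, hv₀, hmin⟩ := hcpt.exists_isMinOn hsp (quad_continuous q).continuousOn
    have hv₀0 : v₀ ≠ 0 := by
      intro hv
      simp [hv] at hv₀
    refine ⟨q v₀, hq v₀ hv₀0, fun v => ?_⟩
    rcases eq_or_ne v 0 with rfl | hv
    · simp
    · have hnv : ‖v‖ ≠ 0 := norm_ne_zero_iff.2 hv
      have hw : (‖v‖⁻¹ • v) ∈ Metric.sphere (0 : Fin n → ℝ) 1 := by
        simp [norm_smul, abs_of_nonneg (inv_nonneg.2 (norm_nonneg v)),
          inv_mul_cancel₀ hnv]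
      have h1 : q v₀ ≤ q (‖v‖⁻¹ • v) := hmin hw
      have h2 : q (‖v‖⁻¹ • v) = ‖v‖⁻¹ ^ 2 * q v := by
        rw [QuadraticMap.map_smul, smul_eq_mul]; ring
      have hv2 : (0:ℝ) < ‖v‖ ^ 2 := by positivity
      rw [h2] at h1
      have hmul := mul_le_mul_of_nonneg_left h1 hv2.le
      have h7 : q v₀ * ‖v‖ ^ 2 ≤ q v := by
        calc q v₀ * ‖v‖ ^ 2 ≤ ‖v‖ ^ 2 * (‖v‖⁻¹ ^ 2 * q v) := by linarith
          _ = q v := by field_simp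
      linarith

private lemma quad_upper {n : ℕ} (q : QuadraticForm ℝ (Fin n → ℝ)) :
    ∃ M > (0:ℝ), ∀ v, q v ≤ M * ‖v‖ ^ 2 := by
  rcases eq_or_ne n 0 with h | h
  · refine ⟨1, one_pos, fun v => ?_⟩
    subst h
    have hv : v = 0 := Subsingleton.elim _ _
    rw [hv, map_zero, norm_zero]; norm_num
  · haveI : Nonempty (Fin n) := ⟨⟨0, Nat.pos_of_ne_zero h⟩⟩
    have hsp : (Metric.sphere (0 : Fin n → ℝ) 1).Nonempty :=
      NormedSpace.sphere_nonempty.2 (by norm_num)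
    have hcpt : IsCompact (Metric.sphere (0 : Fin n → ℝ) 1) := isCompact_sphere _ _
    obtain ⟨v₀, hv₀, hmax⟩ := hcpt.exists_isMaxOn hsp (quad_continuous q).continuousOn
    refine ⟨max (q v₀) 1, lt_max_of_lt_right one_pos, fun v => ?_⟩
    rcases eq_or_ne v 0 with rfl | hv
    · simp
    · have hnv : ‖v‖ ≠ 0 := norm_ne_zero_iff.2 hv
      have hw : (‖v‖⁻¹ • v) ∈ Metric.sphere (0 : Fin n → ℝ) 1 := by
        simp [norm_smul, abs_of_nonneg (inv_nonneg.2 (norm_nonneg v)),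
          inv_mul_cancel₀ hnv]
      have h1 : q (‖v‖⁻¹ • v) ≤ q v₀ := hmax hw
      have h2 : q (‖v‖⁻¹ • v) = ‖v‖⁻¹ ^ 2 * q v := by
        rw [QuadraticMap.map_smul, smul_eq_mul]; ring
      have hv2 : (0:ℝ) < ‖v‖ ^ 2 := by positivity
      rw [h2] at h1
      have h3 : q v ≤ q v₀ * ‖v‖ ^ 2 := by
        have := mul_le_mul_of_nonneg_left h1 hv2.le
        calc q v = ‖v‖ ^ 2 * (‖v‖⁻¹ ^ 2 * q v) := by field_simp
          _ ≤ ‖v‖ ^ 2 * q v₀ := by nlinarith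
          _ = q v₀ * ‖v‖ ^ 2 := by ring
      calc q v ≤ q v₀ * ‖v‖ ^ 2 := h3
        _ ≤ max (q v₀) 1 * ‖v‖ ^ 2 := by nlinarith [le_max_left (q v₀) (1:ℝ)]

/-- Graph representation lemma: a horizontal disk satisfying the cone condition for
`Q(x,y) = α(x) − β(y)` (with `α, β` positive definite quadratic forms) is the graph of a
Lipschitz function over its projection onto the unstable factor. -/
theorem horizontal_disk_graph_representation
    {u s : ℕ}
    (α : QuadraticForm ℝ (Fin u → ℝ)) (β : QuadraticForm ℝ (Fin s → ℝ))
    (hα : α.PosDef) (hβ : β.PosDef)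
    (bc : (Fin u → ℝ) → (Fin u → ℝ) × (Fin s → ℝ))
    (hcont : ContinuousOn bc (Metric.closedBall (0 : Fin u → ℝ) 1))
    (hmaps : ∀ x ∈ Metric.closedBall (0 : Fin u → ℝ) 1,
      (bc x).1 ∈ Metric.closedBall (0 : Fin u → ℝ) 1 ∧
        (bc x).2 ∈ Metric.closedBall (0 : Fin s → ℝ) 1)
    (hcone : ∀ x ∈ Metric.closedBall (0 : Fin u → ℝ) 1,
      ∀ y ∈ Metric.closedBall (0 : Fin u → ℝ) 1, x ≠ y →
        0 < α ((bc x).1 - (bc y).1) - β ((bc x).2 - (bc y).2)) :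
    ∃ (K : NNReal) (g : (Fin u → ℝ) → (Fin s → ℝ)),
      LipschitzOnWith K g ((fun x => (bc x).1) '' Metric.closedBall (0 : Fin u → ℝ) 1) ∧
        (∀ x ∈ Metric.closedBall (0 : Fin u → ℝ) 1,
          g ((bc x).1) ∈ Metric.closedBall (0 : Fin s → ℝ) 1) ∧
        ∀ x ∈ Metric.closedBall (0 : Fin u → ℝ) 1, bc x = ((bc x).1, g ((bc x).1)) := by
  obtain ⟨m, hm, hml⟩ := quad_lower β hβ
  obtain ⟨M, hM, hMu⟩ := quad_upper α
  set D := Metric.closedBall (0 : Fin u → ℝ) 1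
  set Kr : ℝ := Real.sqrt (M / m) with hKr
  -- key estimate
  have key : ∀ x ∈ D, ∀ y ∈ D,
      ‖(bc x).2 - (bc y).2‖ ≤ Kr * ‖(bc x).1 - (bc y).1‖ := by
    intro x hx y hy
    rcases eq_or_ne x y with rfl | hxy
    · simp
    · have h1 := hcone x hx y hy hxy
      have h2 := hml ((bc x).2 - (bc y).2)
      have h3 := hMu ((bc x).1 - (bc y).1)
      have h4 : m * ‖(bc x).2 - (bc y).2‖ ^ 2 ≤ M * ‖(bc x).1 - (bc y).1‖ ^ 2 := by
        linarith
      have h5 : ‖(bc x).2 - (bc y).2‖ ^ 2 ≤ (M / m) * ‖(bc x).1 - (bc y).1‖ ^ 2 := by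
        rw [div_mul_eq_mul_div, le_div_iff₀ hm]; linarith
      have h6 : ‖(bc x).2 - (bc y).2‖ ≤ Real.sqrt ((M / m) * ‖(bc x).1 - (bc y).1‖ ^ 2) := by
        rw [← Real.sqrt_sq (norm_nonneg _)]
        exact Real.sqrt_le_sqrt h5
      rwa [Real.sqrt_mul (by positivity), Real.sqrt_sq (norm_nonneg _)] at h6
  -- injectivity consequence
  have hinj : ∀ x ∈ D, ∀ y ∈ D, (bc x).1 = (bc y).1 → bc x = bc y := by
    intro x hx y hy h
    have := key x hx y hy
    rw [h, sub_self, norm_zero, mul_zero] at this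
    have h2 : (bc x).2 = (bc y).2 := by
      rwa [norm_le_zero_iff, sub_eq_zero] at this
    exact Prod.ext h h2
  classical
  set g : (Fin u → ℝ) → (Fin s → ℝ) := fun p =>
    if h : ∃ x ∈ D, (bc x).1 = p then (bc h.choose).2 else 0 with hg
  have hgspec : ∀ x ∈ D, g ((bc x).1) = (bc x).2 := by
    intro x hx
    have hex : ∃ z ∈ D, (bc z).1 = (bc x).1 := ⟨x, hx, rfl⟩
    rw [hg]
    simp only [dif_pos hex]
    obtain ⟨hz, hz1⟩ := hex.choose_spec
    exact congrArg Prod.snd (hinj _ hz _ hx hz1)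
  refine ⟨Real.toNNReal Kr, g, ?_, ?_, ?_⟩
  · apply LipschitzOnWith.of_dist_le'
    rintro p ⟨x, hx, rfl⟩ q ⟨y, hy, rfl⟩
    rw [hgspec x hx, hgspec y hy, dist_eq_norm, dist_eq_norm]
    exact key x hx y hy
  · intro x hx
    rw [hgspec x hx]
    exact (hmaps x hx).2
  · intro x hx
    rw [hgspec x hx]
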